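/- arXiv:1008.1622 — 4 statements merged into one kernel-verified Lean document; each statement's English description precedes it below -/
import Mathlib

section
/- Let z_1, …, z_n ∈ ℤ_{≥0}^m be pairwise distinct vectors, let x* ∈ ℝ_{>0}^m, let μ be a permutation of {1, …, n}, and let I ⊆ {1, …, m} be nonempty. If the closure of the stratum S_μ in ℝ^m meets L_I (i.e., cl(S_μ) ∩ L_I ≠ ∅), then there exists α ∈ ℝ^m with α_i < 0 for all i ∈ I, α_i = 0 for all i ∉ I, and ⟨z_{μ(i)} − z_{μ(i+1)}, α⟩ ≥ 0 for all i = 1, …, n−1. -/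
open Filter Topology

noncomputable section

/-- The monomial `x^z = ∏ l, x l ^ z l`. -/
def mono {m : ℕ} (zv : Fin m → ℕ) (x : Fin m → ℝ) : ℝ := ∏ l, x l ^ zv l

/-- The ratio monomial `(x/x*)^z = ∏ l, (x l / x* l) ^ z l`. -/
def ratio {m : ℕ} (xstar x : Fin m → ℝ) (zv : Fin m → ℕ) : ℝ :=
  ∏ l, (x l / xstar l) ^ zv l

/-- The mass-action vector field `f(x) = Σ_{i,j} k(i,j) (z_j - z_i) x^{z_i}`
(terms with `k i j = 0` vanish, so this is the sum over reactions). -/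
def maf {m n : ℕ} (z : Fin n → Fin m → ℕ) (k : Fin n → Fin n → ℝ) (x : Fin m → ℝ) :
    Fin m → ℝ :=
  fun l => ∑ i, ∑ j, k i j * ((z j l : ℝ) - (z i l : ℝ)) * mono (z i) x

/-- `x*` is a complex balanced equilibrium. -/
def complexBalanced {m n : ℕ} (z : Fin n → Fin m → ℕ) (k : Fin n → Fin n → ℝ)
    (xstar : Fin m → ℝ) : Prop :=
  ∀ i, ∑ j, k j i * mono (z j) xstar = mono (z i) xstar * ∑ j, k i j

/-- Cyclic successor on `Fin n`. -/
def cyc {n : ℕ} (i : Fin n) : Fin n := ⟨(i.val + 1) % n, Nat.mod_lt _ i.pos⟩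

/-- The system is cyclic: its reactions are exactly `C_i → C_{i+1}` (cyclically). -/
def isCyclic {n : ℕ} (k : Fin n → Fin n → ℝ) : Prop :=
  (∀ i, 0 < k i (cyc i)) ∧ ∀ i j, j ≠ cyc i → k i j = 0

/-- Inclusion `Fin (n-1) → Fin n`. -/
def emb {n : ℕ} (i : Fin (n - 1)) : Fin n := ⟨i.val, by have := i.isLt; omega⟩

/-- Successor inclusion `Fin (n-1) → Fin n`, `i ↦ i+1`. -/
def embS {n : ℕ} (i : Fin (n - 1)) : Fin n := ⟨i.val + 1, by have := i.isLt; omega⟩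

/-- The stratum associated with a permutation `μ` of the complexes. -/
def stratum {m n : ℕ} (z : Fin n → Fin m → ℕ) (xstar : Fin m → ℝ)
    (μ : Equiv.Perm (Fin n)) : Set (Fin m → ℝ) :=
  {x | (∀ l, 0 < x l) ∧
    ∀ i : Fin (n - 1), ratio xstar x (z (μ (emb i))) > ratio xstar x (z (μ (embS i)))}

/-- `L_I`: the relative interior of the face of the nonnegative orthant given by `I`. -/
def LI {m : ℕ} (I : Finset (Fin m)) : Set (Fin m → ℝ) :=
  {x | (∀ i ∈ I, x i = 0) ∧ ∀ i ∉ I, 0 < x i}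

/-- Semi-locking set. -/
def semiLocking {m n : ℕ} (z : Fin n → Fin m → ℕ) (k : Fin n → Fin n → ℝ)
    (I : Finset (Fin m)) : Prop :=
  I.Nonempty ∧ ∀ i j : Fin n, 0 < k i j → (∃ l ∈ I, 0 < z j l) → ∃ l ∈ I, 0 < z i l

/-- The stoichiometric subspace. -/
def stoich {m n : ℕ} (z : Fin n → Fin m → ℕ) (k : Fin n → Fin n → ℝ) :
    Submodule ℝ (Fin m → ℝ) :=
  Submodule.span ℝ {v | ∃ i j : Fin n, 0 < k i j ∧ v = fun l => (z j l : ℝ) - (z i l : ℝ)}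

/-!
Along a sequence `x_k ∈ S_μ` converging to a point of `L_I`, the log-coordinates
`β_k = log (x_k / x*)` satisfy `⟨z_{μ(i)} - z_{μ(i+1)}, β_k⟩ > 0`, tend to `-∞` on `I` and stay
bounded off `I`. Divided by a large constant, they solve the linear system
`⟨z_{μ(i)} - z_{μ(i+1)}, α⟩ ≥ 0`, `α ≤ -1` on `I`, `α = 0` off `I` up to any `ε > 0`.

A finite system of linear inequalities solvable up to every `ε > 0` is solvable: take
minimal-norm `ε`-solutions. If they stay bounded, a limit point solves the system. Otherwise their
directions accumulate at a unit vector `d` with `⟨a_i, d⟩ ≥ 0` for all rows; `d` cannot be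
orthogonal to every row, since subtracting `d` would shorten an `ε`-solution, and adding a large
multiple of `d` to a solution of the rows orthogonal to `d` (induction) solves the whole system.
-/
open scoped RealInnerProductSpace

theorem IsClosed.exists_forall_norm_le {E : Type*} [SeminormedAddCommGroup E] [ProperSpace E]
    {F : Set E} (hF : IsClosed F) (hne : F.Nonempty) : ∃ u ∈ F, ∀ v ∈ F, ‖u‖ ≤ ‖v‖ := by
  obtain ⟨u, hu, hdist⟩ := hF.exists_infDist_eq_dist hne 0
  refine ⟨u, hu, fun v hv => ?_⟩
  simpa [hdist] using Metric.infDist_le_dist_of_mem (x := (0 : E)) hv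

section ApproximateFeasibility

variable {ι E : Type*} [NormedAddCommGroup E] [InnerProductSpace ℝ E]

theorem isClosed_setOf_forall_le_inner (a : ι → E) (c : ι → ℝ) (s : Finset ι) :
    IsClosed {u : E | ∀ i ∈ s, c i ≤ ⟪a i, u⟫} := by
  simp only [Set.ofPred_forall]
  exact isClosed_iInter fun i => isClosed_iInter fun _ =>
    isClosed_le continuous_const (continuous_const.inner continuous_id)

theorem le_inner_of_tendsto {X : Type*} {l : Filter X} [l.NeBot] {a : E} {v : X → E} {x : E}
    {c : X → ℝ} {c₀ : ℝ} (hv : Tendsto v l (𝓝 x)) (hc : Tendsto c l (𝓝 c₀))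
    (h : ∀ᶠ k in l, c k ≤ ⟪a, v k⟫) : c₀ ≤ ⟪a, x⟫ :=
  le_of_tendsto_of_tendsto hc (((continuous_const.inner continuous_id).tendsto x).comp hv) h

theorem exists_tendsto_inv_norm_smul [FiniteDimensional ℝ E] {u : ℕ → E}
    (hu : Tendsto (‖u ·‖) atTop atTop) :
    ∃ d : E, ‖d‖ = 1 ∧ ∃ φ : ℕ → ℕ, StrictMono φ ∧
      Tendsto (fun k => ‖u (φ k)‖⁻¹ • u (φ k)) atTop (𝓝 d) := by
  have hball : ∀ k, ‖u k‖⁻¹ • u k ∈ Metric.closedBall (0 : E) 1 := fun k => by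
    rw [mem_closedBall_zero_iff, norm_smul, norm_inv, norm_norm]
    exact inv_mul_le_one
  obtain ⟨d, -, φ, hφ, hd⟩ := tendsto_subseq_of_bounded Metric.isBounded_closedBall hball
  refine ⟨d, tendsto_nhds_unique' atTop_neBot hd.norm (tendsto_const_nhds.congr' ?_), φ, hφ, hd⟩
  filter_upwards [(hu.comp hφ.tendsto_atTop).eventually_gt_atTop 0] with k hk
  exact (norm_smul_inv_norm (𝕜 := ℝ) (norm_pos_iff.1 hk)).symm

theorem eventually_norm_sub_lt_norm {u : ℕ → E} {d : E} (hu : Tendsto (‖u ·‖) atTop atTop)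
    (hd : Tendsto (fun k => ‖u k‖⁻¹ • u k) atTop (𝓝 d)) (hd₁ : ‖d‖ = 1) :
    ∀ᶠ k in atTop, ‖u k - d‖ < ‖u k‖ := by
  have hinner : Tendsto (fun k => ⟪‖u k‖⁻¹ • u k, d⟫) atTop (𝓝 1) := by
    simpa [real_inner_self_eq_norm_sq, hd₁] using
      Filter.Tendsto.inner (𝕜 := ℝ) hd (tendsto_const_nhds (x := d))
  filter_upwards [hinner.eventually_const_lt (by norm_num : (1 / 2 : ℝ) < 1),
    hu.eventually_gt_atTop 1] with k hk hk₁
  rw [real_inner_smul_left] at hk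
  have hud : ‖u k‖ < 2 * ⟪u k, d⟫ := by
    have := (lt_inv_mul_iff₀ (by linarith)).1 hk
    linarith
  refine lt_of_pow_lt_pow_left₀ 2 (norm_nonneg _) ?_
  rw [norm_sub_sq_real, hd₁]
  nlinarith

theorem exists_forall_le_inner_add_smul {a : ι → E} {b : ι → ℝ} {s : Finset ι} {α d : E}
    (hα : ∀ i ∈ s.filter (fun i => ⟪a i, d⟫ = 0), b i ≤ ⟪a i, α⟫)
    (hd : ∀ i ∈ s, 0 ≤ ⟪a i, d⟫) : ∃ K : ℝ, ∀ i ∈ s, b i ≤ ⟪a i, α + K • d⟫ := by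
  refine ((Filter.eventually_all_finset s).2 fun i hi => ?_).exists (f := atTop)
  simp only [inner_add_right, real_inner_smul_right]
  rcases (hd i hi).eq_or_lt with hzero | hpos
  · refine Eventually.of_forall fun K => ?_
    rw [← hzero, mul_zero, add_zero]
    exact hα i (Finset.mem_filter.2 ⟨hi, hzero.symm⟩)
  · exact (tendsto_atTop_add_const_left _ _ (tendsto_id.atTop_mul_const hpos)).eventually_ge_atTop _

theorem exists_forall_le_inner_of_forall_pos [FiniteDimensional ℝ E] (a : ι → E) (b : ι → ℝ)
    (s : Finset ι) (h : ∀ ε > 0, ∃ u : E, ∀ i ∈ s, b i - ε ≤ ⟪a i, u⟫) :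
    ∃ u : E, ∀ i ∈ s, b i ≤ ⟪a i, u⟫ := by
  induction s using Finset.strongInduction with
  | H s ih =>
  have hε : Tendsto (fun k : ℕ => 1 / ((k : ℝ) + 1)) atTop (𝓝 0) :=
    tendsto_one_div_add_atTop_nhds_zero_nat
  choose u hu hmin using fun k : ℕ =>
    (isClosed_setOf_forall_le_inner a (fun i => b i - 1 / ((k : ℝ) + 1)) s).exists_forall_norm_le
      (h _ Nat.one_div_pos_of_nat)
  by_cases hbdd : ∃ R, ∃ᶠ k in atTop, ‖u k‖ ≤ R
  · obtain ⟨R, hR⟩ := hbdd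
    obtain ⟨x, -, φ, hφ, hx⟩ := tendsto_subseq_of_frequently_bounded
      (Metric.isBounded_closedBall (x := (0 : E)) (r := R)) (by simpa using hR)
    refine ⟨x, fun i hi => le_inner_of_tendsto hx ?_ (Eventually.of_forall fun k => hu (φ k) i hi)⟩
    simpa using (tendsto_const_nhds (x := b i)).sub (hε.comp hφ.tendsto_atTop)
  have hnorm : Tendsto (‖u ·‖) atTop atTop := by
    push Not at hbdd
    exact tendsto_atTop.2 fun R => (hbdd R).mono fun k hk => hk.le
  obtain ⟨d, hd₁, φ, hφ, hd⟩ := exists_tendsto_inv_norm_smul hnorm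
  have hnormφ := hnorm.comp hφ.tendsto_atTop
  have hd_nonneg : ∀ i ∈ s, 0 ≤ ⟪a i, d⟫ := by
    intro i hi
    have hlim := (tendsto_inv_atTop_zero.comp hnormφ).mul
      ((tendsto_const_nhds (x := b i)).sub (hε.comp hφ.tendsto_atTop))
    rw [zero_mul] at hlim
    refine le_inner_of_tendsto hd hlim (Eventually.of_forall fun k => ?_)
    rw [real_inner_smul_right]
    exact mul_le_mul_of_nonneg_left (hu (φ k) i hi) (inv_nonneg.2 (norm_nonneg _))
  by_cases hzero : ∀ i ∈ s, ⟪a i, d⟫ = 0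
  · obtain ⟨k, hk⟩ := (eventually_norm_sub_lt_norm hnormφ hd hd₁).exists
    refine absurd (hmin (φ k) (u (φ k) - d) fun i hi => ?_) hk.not_ge
    rw [inner_sub_right, hzero i hi, sub_zero]
    exact hu (φ k) i hi
  push Not at hzero
  obtain ⟨j, hj, hjd⟩ := hzero
  obtain ⟨α, hα⟩ := ih (s.filter fun i => ⟪a i, d⟫ = 0) (Finset.filter_ssubset.2 ⟨j, hj, hjd⟩)
    fun ε hε => (h ε hε).imp fun u hu i hi => hu i (Finset.mem_filter.1 hi).1
  obtain ⟨K, hK⟩ := exists_forall_le_inner_add_smul hα hd_nonneg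
  exact ⟨α + K • d, hK⟩

end ApproximateFeasibility

theorem exists_forall_sum_mul_nonneg_of_forall_pos {κ : Type*} [Fintype κ] {m : ℕ}
    (w : κ → Fin m → ℝ) (I : Finset (Fin m))
    (h : ∀ ε > 0, ∃ u : Fin m → ℝ, (∀ i, -ε ≤ ∑ l, w i l * u l) ∧ (∀ l ∈ I, u l ≤ ε - 1) ∧
      ∀ l ∉ I, |u l| ≤ ε) :
    ∃ α : Fin m → ℝ, (∀ i, 0 ≤ ∑ l, w i l * α l) ∧ (∀ l ∈ I, α l ≤ -1) ∧ ∀ l ∉ I, α l = 0 := by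
  -- the rows `⟪w i, u⟫ ≥ 0`, `-u l ≥ [l ∈ I]` for all `l`, and `u l ≥ 0` for `l ∉ I`
  let a : κ ⊕ Fin m ⊕ Fin m → EuclideanSpace ℝ (Fin m) :=
    Sum.elim (fun i => WithLp.toLp 2 (w i))
      (Sum.elim (fun l => -EuclideanSpace.single l 1) (fun l => EuclideanSpace.single l 1))
  let b : κ ⊕ Fin m ⊕ Fin m → ℝ := Sum.elim 0 (Sum.elim (fun l => if l ∈ I then 1 else 0) 0)
  have key :=
    exists_forall_le_inner_of_forall_pos a b (Finset.univ.disjSum (Finset.univ.disjSum Iᶜ))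
  simp only [a, b, Sum.forall, Sum.elim_inl, Sum.elim_inr, Finset.inl_mem_disjSum,
    Finset.inr_mem_disjSum, Finset.mem_univ, Finset.mem_compl, forall_const, inner_neg_left,
    EuclideanSpace.inner_single_left] at key
  obtain ⟨α, hα, hαI, hαIc⟩ := key fun ε hε => by
    obtain ⟨u, hu, huI, huIc⟩ := h ε hε
    refine ⟨WithLp.toLp 2 u, fun i => ?_, fun l => ?_, fun l hl => ?_⟩
    · simpa [PiLp.inner_apply, mul_comm] using hu i
    · by_cases hl : l ∈ I
      · simpa [hl] using le_sub_iff_add_le.1 (huI l hl)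
      · simpa [hl] using (abs_le.1 (huIc l hl)).2
    · simpa using (abs_le.1 (huIc l hl)).1
  refine ⟨α.ofLp, fun i => by simpa [PiLp.inner_apply, mul_comm] using hα i,
    fun l hl => le_neg_of_le_neg (by simpa [hl] using hαI l),
    fun l hl => le_antisymm (by simpa [hl] using hαI l) (by simpa using hαIc l hl)⟩

theorem exists_forall_sum_mul_nonneg_of_tendsto {κ : Type*} [Fintype κ] {m : ℕ}
    (w : κ → Fin m → ℝ) (I : Finset (Fin m)) {β : ℕ → Fin m → ℝ}
    (hw : ∀ k i, 0 ≤ ∑ l, w i l * β k l) (hI : ∀ l ∈ I, Tendsto (β · l) atTop atBot)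
    (hIc : ∀ l ∉ I, IsBoundedUnder (· ≤ ·) atTop fun k => |β k l|) :
    ∃ α : Fin m → ℝ, (∀ i, 0 ≤ ∑ l, w i l * α l) ∧ (∀ l ∈ I, α l < 0) ∧ ∀ l ∉ I, α l = 0 := by
  obtain ⟨α, hα, hαI, hαIc⟩ := exists_forall_sum_mul_nonneg_of_forall_pos w I fun ε hε => by
    have hM : ∀ᶠ M in atTop, 0 < M ∧ ∀ l ∈ Iᶜ, ∀ᶠ k in atTop, |β k l| ≤ ε * M := by
      refine (eventually_gt_atTop 0).and ((eventually_all_finset _).2 fun l hl => ?_)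
      obtain ⟨C, hC⟩ := (hIc l (Finset.mem_compl.1 hl)).eventually_le
      filter_upwards [eventually_ge_atTop (C / ε)] with M hM
      exact hC.mono fun k hk => hk.trans ((div_le_iff₀' hε).1 hM)
    obtain ⟨M, hMpos, hMβ⟩ := hM.exists
    have hk : ∀ᶠ k in atTop, (∀ l ∈ I, β k l ≤ -M) ∧ ∀ l ∈ Iᶜ, |β k l| ≤ ε * M :=
      ((eventually_all_finset I).2 fun l hl => (hI l hl).eventually_le_atBot (-M)).and
        ((eventually_all_finset Iᶜ).2 hMβ)
    obtain ⟨k, hkI, hkIc⟩ := hk.exists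
    refine ⟨M⁻¹ • β k, fun i => ?_, fun l hl => ?_, fun l hl => ?_⟩
    · have : 0 ≤ ∑ l, w i l * (M⁻¹ • β k) l := by
        simp only [Pi.smul_apply, smul_eq_mul, mul_left_comm _ M⁻¹, ← Finset.mul_sum]
        exact mul_nonneg (inv_nonneg.2 hMpos.le) (hw k i)
      linarith
    · have : (M⁻¹ • β k) l ≤ -1 := by
        rw [Pi.smul_apply, smul_eq_mul, inv_mul_le_iff₀ hMpos]
        linarith [hkI l hl]
      linarith
    · rw [Pi.smul_apply, smul_eq_mul, abs_mul, abs_inv, abs_of_pos hMpos, inv_mul_le_iff₀ hMpos,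
        mul_comm]
      exact hkIc l (Finset.mem_compl.2 hl)
  exact ⟨α, hα, fun l hl => (hαI l hl).trans_lt (by norm_num), hαIc⟩

section Stratum

variable {m n : ℕ} {xstar : Fin m → ℝ}

def logRatio (xstar x : Fin m → ℝ) (l : Fin m) : ℝ := Real.log (x l / xstar l)

theorem log_ratio_eq_sum (hxs : ∀ l, 0 < xstar l) {x : Fin m → ℝ} (hx : ∀ l, 0 < x l)
    (zv : Fin m → ℕ) : Real.log (ratio xstar x zv) = ∑ l, (zv l : ℝ) * logRatio xstar x l := by
  rw [ratio, Real.log_prod fun l _ => (pow_pos (div_pos (hx l) (hxs l)) _).ne']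
  simp only [Real.log_pow, logRatio]

theorem ratio_pos (hxs : ∀ l, 0 < xstar l) {x : Fin m → ℝ} (hx : ∀ l, 0 < x l)
    (zv : Fin m → ℕ) : 0 < ratio xstar x zv :=
  Finset.prod_pos fun l _ => pow_pos (div_pos (hx l) (hxs l)) _

theorem sum_sub_mul_logRatio_pos_of_mem_stratum (hxs : ∀ l, 0 < xstar l)
    {z : Fin n → Fin m → ℕ} {μ : Equiv.Perm (Fin n)} {x : Fin m → ℝ}
    (hx : x ∈ stratum z xstar μ) (i : Fin (n - 1)) :
    0 < ∑ l, ((z (μ (emb i)) l : ℝ) - z (μ (embS i)) l) * logRatio xstar x l := by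
  have hlt := Real.log_lt_log (ratio_pos hxs hx.1 _) (hx.2 i)
  rw [log_ratio_eq_sum hxs hx.1, log_ratio_eq_sum hxs hx.1] at hlt
  simp only [sub_mul, Finset.sum_sub_distrib]
  linarith

theorem tendsto_logRatio_atBot {x : ℕ → Fin m → ℝ} {l : Fin m} (hxs : 0 < xstar l)
    (hx : ∀ k, 0 < x k l) (hlim : Tendsto (x · l) atTop (𝓝 0)) :
    Tendsto (fun k => logRatio xstar (x k) l) atTop atBot := by
  refine Real.tendsto_log_nhdsGT_zero.comp (tendsto_nhdsWithin_iff.2 ⟨?_, ?_⟩)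
  · simpa using hlim.div_const (xstar l)
  · exact Eventually.of_forall fun k => div_pos (hx k) hxs

end Stratum

theorem stmt0_general {m n : ℕ} (z : Fin n → Fin m → ℕ)
    (xstar : Fin m → ℝ) (hxs : ∀ l, 0 < xstar l)
    (μ : Equiv.Perm (Fin n)) (I : Finset (Fin m))
    (h : (closure (stratum z xstar μ) ∩ LI I).Nonempty) :
    ∃ α : Fin m → ℝ, (∀ i ∈ I, α i < 0) ∧ (∀ i ∉ I, α i = 0) ∧
      ∀ i : Fin (n - 1),
        0 ≤ ∑ l, ((z (μ (emb i)) l : ℝ) - (z (μ (embS i)) l : ℝ)) * α l := by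
  obtain ⟨y, hy, hyI, hyIc⟩ := h
  obtain ⟨x, hxS, hxy⟩ := mem_closure_iff_seq_limit.1 hy
  have hcoord := tendsto_pi_nhds.1 hxy
  obtain ⟨α, hα, hαI, hαIc⟩ := exists_forall_sum_mul_nonneg_of_tendsto
    (fun i l => (z (μ (emb i)) l : ℝ) - z (μ (embS i)) l) I
    (fun k i => (sum_sub_mul_logRatio_pos_of_mem_stratum hxs (hxS k) i).le)
    (fun l hl => tendsto_logRatio_atBot (hxs l) (fun k => (hxS k).1 l) (hyI l hl ▸ hcoord l))
    (fun l hl =>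
      (((hcoord l).div_const _).log (div_pos (hyIc l hl) (hxs l)).ne').abs.isBoundedUnder_le)
  exact ⟨α, hαI, hαIc, hα⟩

/-- if the closure of the stratum `S_μ` meets `L_I`, then there is a vector
`α` that is negative on `I`, zero off `I`, and has nonnegative inner product with each
`z_{μ(i)} - z_{μ(i+1)}`, `i = 1, …, n-1`. -/
theorem stmt0 {m n : ℕ} (z : Fin n → Fin m → ℕ) (hz : Function.Injective z)
    (xstar : Fin m → ℝ) (hxs : ∀ l, 0 < xstar l)
    (μ : Equiv.Perm (Fin n)) (I : Finset (Fin m)) (hI : I.Nonempty)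
    (h : (closure (stratum z xstar μ) ∩ LI I).Nonempty) :
    ∃ α : Fin m → ℝ, (∀ i ∈ I, α i < 0) ∧ (∀ i ∉ I, α i = 0) ∧
      ∀ i : Fin (n - 1),
        0 ≤ ∑ l, ((z (μ (emb i)) l : ℝ) - (z (μ (embS i)) l : ℝ)) * α l :=
  stmt0_general z xstar hxs μ I h
end
end

section
/- Consider a cyclic mass-action system with n ≥ 2 complexes that is complex balanced at x* ∈ ℝ_{>0}^m, and let μ be any permutation of {1, …, n}. Then there exists κ > 0 such that for all x ∈ ℝ^m, f(x) = κ · Σ_{i=1}^{n−1} ( Σ_{j=1}^{i} s_{μ(j)} ) · ( (x/x*)^{z_{μ(i)}} − (x/x*)^{z_{μ(i+1)}} ), where s_j := z_{j+1} − z_j with indices taken mod n (z_{n+1} = z_1) and (x/x*)^z := Π_{l=1}^m (x_l/x*_l)^{z_l}. -/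
/-! For a cyclic system, complex balance at `x*` says that every reaction `C_i → C_{i+1}` carries
the same flux `κ = k(i, i+1) (x*)^{z_i}`, so `f(x) = κ Σ_i s_i (x/x*)^{z_i}`. Listing the complexes
in the order `μ` and summing by parts gives the claimed form; the boundary term vanishes because
`Σ_i s_i = 0`. -/

open Filter Topology

noncomputable section

open Finset

theorem sum_mul_eq_sum_partialSum_mul_sub {R : Type*} [CommRing R] {n : ℕ}
    (a r : Fin n → R) (ha : ∑ i, a i = 0) :
    ∑ i, a i * r i = ∑ i : Fin (n - 1),
      (∑ j ∈ univ.filter (fun j : Fin (n - 1) => j.val ≤ i.val), a (emb j))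
        * (r (emb i) - r (embS i)) := by
  set A : ℕ → R := fun j => if h : j < n then a ⟨j, h⟩ else 0
  set ρ : ℕ → R := fun j => if h : j < n then r ⟨j, h⟩ else 0
  have hA : ∀ i : Fin n, a i = A i := fun i => by simp [A]
  have hρ : ∀ i : Fin n, r i = ρ i := fun i => by simp [ρ]
  have hpartial (i : Fin (n - 1)) :
      ∑ j ∈ univ.filter (fun j : Fin (n - 1) => j.val ≤ i.val), a (emb j)
        = ∑ j ∈ range (i.val + 1), A j := by
    rw [show univ.filter (fun j : Fin (n - 1) => j.val ≤ i.val) = Finset.Iic i from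
        Finset.ext fun j => by simp only [mem_filter, mem_univ, true_and, mem_Iic, Fin.le_def],
      Nat.range_succ_eq_Iic, ← Fin.map_valEmbedding_Iic, sum_map]
    exact sum_congr rfl fun j _ => hA (emb j)
  have hsum : ∑ j ∈ range n, A j = 0 := by
    rw [← Fin.sum_univ_eq_sum_range]; simpa only [hA] using ha
  calc ∑ i, a i * r i = ∑ j ∈ range n, ρ j • A j := by
        rw [← Fin.sum_univ_eq_sum_range (fun j => ρ j • A j)]
        exact sum_congr rfl fun i _ => by rw [hA, hρ, smul_eq_mul, mul_comm]
    _ = ∑ j ∈ range (n - 1), (∑ i ∈ range (j + 1), A i) * (ρ j - ρ (j + 1)) := by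
        rw [sum_range_by_parts, hsum, smul_zero, zero_sub, ← sum_neg_distrib]
        exact sum_congr rfl fun j _ => by rw [smul_eq_mul]; ring
    _ = _ := by
        rw [← Fin.sum_univ_eq_sum_range
          (fun j => (∑ i ∈ range (j + 1), A i) * (ρ j - ρ (j + 1)))]
        exact sum_congr rfl fun i _ => by rw [hpartial, hρ, hρ]; rfl

theorem cyc_eq_finRotate {n : ℕ} : (cyc : Fin n → Fin n) = finRotate n := by
  funext i
  cases n with
  | zero => exact i.elim0
  | succ p => ext; simp [cyc, Fin.val_add]

theorem cyc_injective {n : ℕ} : Function.Injective (cyc : Fin n → Fin n) :=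
  cyc_eq_finRotate ▸ (finRotate n).injective

theorem cyc_invariant_apply_eq_apply_zero {α : Type*} {p : ℕ} (g : Fin (p + 1) → α)
    (hg : ∀ i, g (cyc i) = g i) (i : Fin (p + 1)) : g i = g 0 := by
  have hinv : g ∘ finRotate (p + 1) = g := funext fun j => by
    rw [← cyc_eq_finRotate, Function.comp_apply, hg]
  calc g i = g (finCycle i 0) := by simp
    _ = g 0 := by
      rw [finCycle_eq_finRotate_iterate]
      exact congrFun (Function.iterate_invariant hinv i) 0

theorem sum_apply_cyc_sub {M : Type*} [AddCommGroup M] {n : ℕ} (f : Fin n → M) :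
    ∑ i, (f (cyc i) - f i) = 0 := by
  simp_rw [sum_sub_distrib, cyc_eq_finRotate, Equiv.sum_comp, sub_self]

theorem mono_pos {m : ℕ} (zv : Fin m → ℕ) {x : Fin m → ℝ} (hx : ∀ l, 0 < x l) :
    0 < mono zv x :=
  prod_pos fun l _ => pow_pos (hx l) _

theorem mono_eq_ratio_mul_mono {m : ℕ} (zv : Fin m → ℕ) {xstar : Fin m → ℝ}
    (hxs : ∀ l, xstar l ≠ 0) (x : Fin m → ℝ) :
    mono zv x = ratio xstar x zv * mono zv xstar := by
  simp only [mono, ratio, ← prod_mul_distrib, ← mul_pow, div_mul_cancel₀ _ (hxs _)]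

namespace isCyclic

variable {n : ℕ} {k : Fin n → Fin n → ℝ}

theorem sum_row_mul (hk : isCyclic k) (F : Fin n → ℝ) (i : Fin n) :
    ∑ j, k i j * F j = k i (cyc i) * F (cyc i) :=
  sum_eq_single (cyc i) (fun j _ hj => by rw [hk.2 i j hj, zero_mul]) (by simp)

theorem sum_col_mul (hk : isCyclic k) (F : Fin n → ℝ) (i : Fin n) :
    ∑ j, k j (cyc i) * F j = k i (cyc i) * F i :=
  sum_eq_single i
    (fun j _ hj => by rw [hk.2 j (cyc i) fun h => hj (cyc_injective h).symm, zero_mul])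
    (by simp)

theorem flux_cyc (hk : isCyclic k) {m : ℕ} {z : Fin n → Fin m → ℕ} {xstar : Fin m → ℝ}
    (hcb : complexBalanced z k xstar) (i : Fin n) :
    k (cyc i) (cyc (cyc i)) * mono (z (cyc i)) xstar = k i (cyc i) * mono (z i) xstar := by
  have h := hcb (cyc i)
  have hrow : ∑ j, k (cyc i) j = k (cyc i) (cyc (cyc i)) := by
    simpa using hk.sum_row_mul (fun _ => 1) (cyc i)
  rw [hk.sum_col_mul (fun j => mono (z j) xstar), hrow] at h
  rw [h, mul_comm]

theorem maf_eq (hk : isCyclic k) {m : ℕ} {z : Fin n → Fin m → ℕ} {xstar : Fin m → ℝ}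
    (hxs : ∀ l, xstar l ≠ 0) {κ : ℝ} (hflux : ∀ i, k i (cyc i) * mono (z i) xstar = κ)
    (x : Fin m → ℝ) (l : Fin m) :
    maf z k x l = κ * ∑ i, ((z (cyc i) l : ℝ) - z i l) * ratio xstar x (z i) := by
  rw [maf, mul_sum]
  refine sum_congr rfl fun i _ => ?_
  simp_rw [mul_assoc]
  rw [hk.sum_row_mul (fun j => ((z j l : ℝ) - z i l) * mono (z i) x),
    mono_eq_ratio_mul_mono _ hxs, ← hflux i]
  ring

end isCyclic

theorem stmt3_general {m n : ℕ} (hn : 2 ≤ n) (z : Fin n → Fin m → ℕ)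
    (k : Fin n → Fin n → ℝ)
    (hcyc : isCyclic k)
    (xstar : Fin m → ℝ) (hxs : ∀ l, 0 < xstar l)
    (hcb : complexBalanced z k xstar) (μ : Equiv.Perm (Fin n)) :
    ∃ κ : ℝ, 0 < κ ∧ ∀ (x : Fin m → ℝ) (l : Fin m),
      maf z k x l = κ * ∑ i : Fin (n - 1),
        (∑ j ∈ Finset.univ.filter (fun j : Fin (n - 1) => j.val ≤ i.val),
          ((z (cyc (μ (emb j))) l : ℝ) - (z (μ (emb j)) l : ℝ)))
        * (ratio xstar x (z (μ (emb i))) - ratio xstar x (z (μ (embS i)))) := by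
  obtain ⟨p, rfl⟩ : ∃ p, n = p + 1 := ⟨n - 1, by omega⟩
  refine ⟨k 0 (cyc 0) * mono (z 0) xstar, mul_pos (hcyc.1 0) (mono_pos _ hxs), fun x l => ?_⟩
  have hflux := cyc_invariant_apply_eq_apply_zero (fun i => k i (cyc i) * mono (z i) xstar)
    (hcyc.flux_cyc hcb)
  have hstoich : ∑ i, ((z (cyc (μ i)) l : ℝ) - z (μ i) l) = 0 :=
    (Equiv.sum_comp μ fun i => (z (cyc i) l : ℝ) - z i l).trans
      (sum_apply_cyc_sub fun i => (z i l : ℝ))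
  rw [hcyc.maf_eq (fun l => (hxs l).ne') hflux, ← Equiv.sum_comp μ]
  exact congrArg _ (sum_mul_eq_sum_partialSum_mul_sub _ _ hstoich)

/-- a cyclic complex balanced system can be rewritten, for any permutation
`μ` of the complexes, as
`f(x) = κ Σ_{i=1}^{n-1} (Σ_{j=1}^i s_{μ(j)}) ((x/x*)^{z_{μ(i)}} - (x/x*)^{z_{μ(i+1)}})`,
where `s_j = z_{j+1} - z_j` (indices mod `n`). -/
theorem stmt3 {m n : ℕ} (hn : 2 ≤ n) (z : Fin n → Fin m → ℕ) (hz : Function.Injective z)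
    (k : Fin n → Fin n → ℝ) (hknn : ∀ i j, 0 ≤ k i j) (hkd : ∀ i, k i i = 0)
    (hcyc : isCyclic k)
    (xstar : Fin m → ℝ) (hxs : ∀ l, 0 < xstar l)
    (hcb : complexBalanced z k xstar) (μ : Equiv.Perm (Fin n)) :
    ∃ κ : ℝ, 0 < κ ∧ ∀ (x : Fin m → ℝ) (l : Fin m),
      maf z k x l = κ * ∑ i : Fin (n - 1),
        (∑ j ∈ Finset.univ.filter (fun j : Fin (n - 1) => j.val ≤ i.val),
          ((z (cyc (μ (emb j))) l : ℝ) - (z (μ (emb j)) l : ℝ)))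
        * (ratio xstar x (z (μ (emb i))) - ratio xstar x (z (μ (embS i)))) :=
  stmt3_general hn z k hcyc xstar hxs hcb μ
end
end

section
/- Consider a mass-action system that is complex balanced at x* ∈ ℝ_{>0}^m, let μ be a permutation of {1, …, n}, and let I ⊆ {1, …, m} be nonempty. If cl(S_μ) ∩ L_I ≠ ∅, then there exists α ∈ ℝ^m with α_i < 0 for all i ∈ I and α_i = 0 for all i ∉ I, such that ⟨α, f(x)⟩ ≤ 0 for every x ∈ cl(S_μ). -/
open Filter Topology

noncomputable section

/-!
Put `A i = ⟨α, z_i⟩`, `r i = (x/x*)^{z_i}` and `κ i j = k(i,j) (x*)^{z_i}`. Then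
`⟨α, f(x)⟩ = ∑ i, r i ∑ j, κ i j (A j - A i)`, and complex balancing says exactly that `κ` has
equal row and column sums. For such rates the drift `∑ j, κ i j (A j - A i)`, summed over a set `U`
on which `A` is larger than off `U`, is nonpositive; cutting `r` into its level sets then gives
`∑ i, r i ∑ j, κ i j (A j - A i) ≤ 0` whenever `A` is weakly larger wherever `r` is strictly
larger. On `cl(S_μ)` the ratios `r ∘ μ` decrease, so it suffices to find `α` with `A ∘ μ`
decreasing.

For that take `x_s ∈ S_μ` converging to a point of `L_I`. The vectors `log (x_s / x*)` pair
positively with every difference `z_{μ i} - z_{μ (i+1)}`, tend to `-∞` in the coordinates in `I`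
and converge in the others. Hence no `e_l`, `l ∈ I`, is a nonnegative combination of these
differences (restricted to `I`) and of the `-e_{l'}`, `l' ∈ I`; since finitely generated cones are
closed, Farkas' lemma turns this into the coordinates of `α`, one `l ∈ I` at a time.
-/

open Finset

section Caratheodory

variable {ι E : Type*} [Fintype ι] [AddCommGroup E] [Module ℝ E]

lemma exists_nonneg_sum_smul_eq_card_support_lt (g : ι → E) {c a : ι → ℝ} (hc : 0 ≤ c)
    (ha : ∑ i, a i • g i = 0) (hac : ∀ i, c i = 0 → a i = 0) {j : ι} (hj : 0 < a j) :
    ∃ c' : ι → ℝ, 0 ≤ c' ∧ ∑ i, c' i • g i = ∑ i, c i • g i ∧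
      #{i | c' i ≠ 0} < #{i | c i ≠ 0} := by
  classical
  obtain ⟨i₀, hi₀, hmin⟩ :=
    ({i | 0 < a i} : Finset ι).exists_min_image (fun i => c i / a i) ⟨j, by simpa using hj⟩
  have ha₀ : 0 < a i₀ := (mem_filter.mp hi₀).2
  set t := c i₀ / a i₀
  have ht : 0 ≤ t := div_nonneg (hc i₀) ha₀.le
  refine ⟨c - t • a, fun i => ?_, ?_, card_lt_card ?_⟩
  · have : t * a i ≤ c i := by
      rcases le_or_gt (a i) 0 with hai | hai
      · exact (mul_nonpos_of_nonneg_of_nonpos ht hai).trans (hc i)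
      · exact (le_div_iff₀ hai).mp (hmin i (by simpa using hai))
    simpa using this
  · simp [sub_smul, sum_sub_distrib, mul_smul, ← smul_sum, ha]
  · refine ssubset_iff_of_subset (fun i => ?_) |>.mpr ⟨i₀, ?_, ?_⟩
    · simp only [mem_filter, mem_univ, true_and]
      intro h hc0
      simp [hc0, hac i hc0] at h
    · simpa using fun h => (hac i₀ h).not_gt ha₀
    · simp [t, ha₀.ne']

lemma exists_linearIndepOn_nonneg_sum_smul_eq (g : ι → E) (c : ι → ℝ) (hc : 0 ≤ c) :
    ∃ T : Finset ι, LinearIndepOn ℝ g T ∧ ∃ d : ι → ℝ, 0 ≤ d ∧ (∀ i ∉ T, d i = 0) ∧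
      ∑ i, d i • g i = ∑ i, c i • g i := by
  classical
  induction hN : #{i | c i ≠ 0} using Nat.strong_induction_on generalizing c with
  | _ N ih =>
  by_cases hli : LinearIndepOn ℝ g ({i | c i ≠ 0} : Finset ι)
  · exact ⟨_, hli, c, hc, fun i hi => by simpa using hi, rfl⟩
  obtain ⟨f, hf, i, hi, hfi⟩ := not_linearIndepOn_finset_iff.mp hli
  set a : ι → ℝ := fun i => if c i ≠ 0 then f i else 0
  have ha : ∑ i, a i • g i = 0 := by
    rw [← hf, sum_filter]
    exact sum_congr rfl fun i _ => by split_ifs <;> simp [a, *]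
  have hac : ∀ i, c i = 0 → a i = 0 := fun i h => by simp [a, h]
  have hai : a i = f i := by simp_all [a]
  obtain ⟨c', hc', hsum, hlt⟩ : ∃ c' : ι → ℝ, 0 ≤ c' ∧ ∑ i, c' i • g i = ∑ i, c i • g i ∧
      #{i | c' i ≠ 0} < #{i | c i ≠ 0} := by
    rcases hfi.lt_or_gt with hneg | hpos
    · exact exists_nonneg_sum_smul_eq_card_support_lt g hc (a := -a) (by simp [neg_smul, ha])
        (fun i h => by simp [hac i h]) (j := i) (by simpa [hai] using hneg)
    · exact exists_nonneg_sum_smul_eq_card_support_lt g hc ha hac (j := i) (by rwa [hai])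
  obtain ⟨T, hT, d, hd, hdT, hdsum⟩ := ih _ (hN ▸ hlt) c' hc' rfl
  exact ⟨T, hT, d, hd, hdT, hdsum.trans hsum⟩

end Caratheodory

namespace PointedCone

variable {ι E : Type*} [Fintype ι]

lemma mem_hull_range_iff_exists_nonneg [AddCommGroup E] [Module ℝ E] (g : ι → E) (x : E) :
    x ∈ hull ℝ (Set.range g) ↔ ∃ c : ι → ℝ, 0 ≤ c ∧ ∑ i, c i • g i = x := by
  rw [Submodule.mem_span_range_iff_exists_fun]
  constructor
  · rintro ⟨c, rfl⟩
    exact ⟨fun i => c i, fun i => (c i).2, rfl⟩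
  · rintro ⟨c, hc, rfl⟩
    exact ⟨fun i => ⟨c i, hc i⟩, rfl⟩

lemma isClosed_hull_range [AddCommGroup E] [Module ℝ E] [TopologicalSpace E]
    [IsTopologicalAddGroup E] [ContinuousSMul ℝ E] [T2Space E] (g : ι → E) :
    IsClosed (hull ℝ (Set.range g) : Set E) := by
  classical
  have hunion : (hull ℝ (Set.range g) : Set E) =
      ⋃ (T : Finset ι) (_ : LinearIndepOn ℝ g T),
        Fintype.linearCombination ℝ (fun i : T => g i) '' Set.Ici 0 := by
    ext x
    simp only [SetLike.mem_coe, mem_hull_range_iff_exists_nonneg, Set.mem_iUnion, Set.mem_image,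
      Set.mem_Ici, Fintype.linearCombination_apply]
    constructor
    · rintro ⟨c, hc, rfl⟩
      obtain ⟨T, hT, d, hd, hdT, hsum⟩ := exists_linearIndepOn_nonneg_sum_smul_eq g c hc
      refine ⟨T, hT, fun i => d i, fun i => hd i, ?_⟩
      rw [← hsum, sum_coe_sort T fun i => d i • g i]
      exact sum_subset (subset_univ T) fun i _ hi => by simp [hdT i hi]
    · rintro ⟨T, -, c, hc, rfl⟩
      refine ⟨fun i => if h : i ∈ T then c ⟨i, h⟩ else 0, fun i => ?_, ?_⟩
      · by_cases h : i ∈ T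
        · simpa [h] using hc ⟨i, h⟩
        · simp [h]
      · rw [← sum_subset (subset_univ T) fun i _ hi => by simp [hi], ← sum_coe_sort T]
        simp
  rw [hunion]
  refine isClosed_iUnion_of_finite fun T => isClosed_iUnion_of_finite fun hT => ?_
  exact (LinearMap.isClosedEmbedding_of_injective (LinearMap.ker_eq_bot.mpr
    (linearIndependent_iff_injective_fintypeLinearCombination.mp hT))).isClosedMap _ isClosed_Ici

end PointedCone

section Farkas

variable {ι κ σ : Type*} [Fintype ι] [Fintype κ]

lemma exists_dotProduct_nonneg_of_tendsto_atBot (w : ι → κ → ℝ) (b : κ → ℝ) {l : Filter σ}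
    [l.NeBot] (γ : σ → κ → ℝ) (hw : ∀ i, ∃ C, ∀ᶠ s in l, C ≤ w i ⬝ᵥ γ s)
    (hb : Tendsto (fun s => b ⬝ᵥ γ s) l atBot) :
    ∃ y : κ → ℝ, (∀ i, 0 ≤ w i ⬝ᵥ y) ∧ b ⬝ᵥ y < 0 := by
  classical
  have hb_not : b ∉ PointedCone.hull ℝ (Set.range w) := by
    rw [PointedCone.mem_hull_range_iff_exists_nonneg]
    rintro ⟨c, hc, rfl⟩
    choose C hC using hw
    obtain ⟨s, hs, hlt⟩ := ((eventually_all.mpr hC).and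
      (hb.eventually (eventually_lt_atBot (∑ i, c i * C i)))).exists
    simp only [sum_dotProduct, smul_dotProduct, smul_eq_mul] at hlt
    exact hlt.not_ge (sum_le_sum fun i _ => mul_le_mul_of_nonneg_left (hs i) (hc i))
  obtain ⟨f, hf, hfb⟩ := ProperCone.hyperplane_separation_point
    { toSubmodule := PointedCone.hull ℝ (Set.range w),
      isClosed' := PointedCone.isClosed_hull_range w } hb_not
  have hf_eq : ∀ x, f x = x ⬝ᵥ fun j => f (Pi.single j 1) := fun x => by
    conv_lhs => rw [← univ_sum_single x]
    rw [map_sum, dotProduct]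
    refine sum_congr rfl fun j _ => ?_
    rw [← smul_eq_mul, ← map_smul, ← Pi.single_smul, smul_eq_mul, mul_one]
  refine ⟨fun j => f (Pi.single j 1), fun i => ?_, by rwa [← hf_eq]⟩
  rw [← hf_eq]
  exact hf _ (PointedCone.subset_hull ⟨i, rfl⟩)

end Farkas

section Drift

variable {ι : Type*} [Fintype ι]

def drift (κ : ι → ι → ℝ) (A : ι → ℝ) (i : ι) : ℝ := ∑ j, κ i j * (A j - A i)

variable {κ : ι → ι → ℝ}

lemma sum_mul_drift_eq (hbal : ∀ i, ∑ j, κ j i = ∑ j, κ i j) (w A : ι → ℝ) :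
    ∑ i, w i * drift κ A i = ∑ i, ∑ j, κ i j * (w i - w j) * A j := by
  have hout : ∑ i, w i * A i * ∑ j, κ i j = ∑ i, ∑ j, κ i j * w j * A j := by
    simp_rw [← hbal, mul_sum]
    rw [sum_comm]
    exact sum_congr rfl fun i _ => sum_congr rfl fun j _ => by ring
  calc ∑ i, w i * drift κ A i
      = ∑ i, ∑ j, κ i j * w i * A j - ∑ i, w i * A i * ∑ j, κ i j := by
        simp_rw [drift, mul_sum, ← sum_sub_distrib]
        exact sum_congr rfl fun i _ => sum_congr rfl fun j _ => by ring
    _ = ∑ i, ∑ j, κ i j * (w i - w j) * A j := by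
        rw [hout, ← sum_sub_distrib]
        exact sum_congr rfl fun i _ => by rw [← sum_sub_distrib]; simp_rw [mul_sub, sub_mul]

lemma sum_const_mul_drift (hbal : ∀ i, ∑ j, κ j i = ∑ j, κ i j) (c : ℝ) (A : ι → ℝ) :
    ∑ i, c * drift κ A i = 0 := by
  simpa using sum_mul_drift_eq hbal (fun _ => c) A

lemma drift_sub_const (A : ι → ℝ) (a : ℝ) : drift κ (fun j => A j - a) = drift κ A := by
  ext i
  simp only [drift, sub_sub_sub_cancel_right]

lemma sum_drift_nonpos_of_forall_le (hκ : ∀ i j, 0 ≤ κ i j)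
    (hbal : ∀ i, ∑ j, κ j i = ∑ j, κ i j) (A : ι → ℝ) (U : Finset ι)
    (hU : ∀ i ∈ U, ∀ j ∉ U, A j ≤ A i) : ∑ i ∈ U, drift κ A i ≤ 0 := by
  classical
  rcases U.eq_empty_or_nonempty with rfl | hne
  · simp
  set a := U.inf' hne A
  have ha_le : ∀ i ∈ U, a ≤ A i := fun i hi => inf'_le A hi
  have hle_a : ∀ j ∉ U, A j ≤ a := fun j hj => (le_inf'_iff hne A).mpr fun i hi => hU i hi j hj
  -- after shifting `A` by `a`, every term of the expansion below is `≤ 0`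
  calc ∑ i ∈ U, drift κ A i
      = ∑ i, (if i ∈ U then 1 else 0) * drift κ (fun j => A j - a) i := by
        simp [drift_sub_const]
    _ = ∑ i, ∑ j, κ i j * ((if i ∈ U then 1 else 0) - (if j ∈ U then 1 else 0)) * (A j - a) :=
        sum_mul_drift_eq hbal _ _
    _ ≤ 0 := by
        refine sum_nonpos fun i _ => sum_nonpos fun j _ => ?_
        by_cases hi : i ∈ U <;> by_cases hj : j ∈ U
        · simp [hi, hj]
        · simpa [hi, hj] using mul_nonpos_of_nonneg_of_nonpos (hκ i j) (sub_nonpos.mpr (hle_a j hj))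
        · simpa [hi, hj] using mul_nonneg (hκ i j) (sub_nonneg.mpr (ha_le j hj))
        · simp [hi, hj]

lemma sum_mul_drift_eq_truncate_add (r A : ι → ℝ) {τ τ' : ℝ} (hτ' : τ' ≤ τ)
    (hr : ∀ i, r i ≠ τ → r i ≤ τ') :
    ∑ i, r i * drift κ A i =
      ∑ i, min (r i) τ' * drift κ A i + (τ - τ') * ∑ i with r i = τ, drift κ A i := by
  classical
  rw [sum_filter, mul_sum, ← sum_add_distrib]
  refine sum_congr rfl fun i _ => ?_
  by_cases h : r i = τ
  · simp only [h, if_true, min_eq_right hτ']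
    ring
  · simp [h, min_eq_left (hr i h)]

theorem sum_mul_drift_nonpos (hκ : ∀ i j, 0 ≤ κ i j) (hbal : ∀ i, ∑ j, κ j i = ∑ j, κ i j)
    (r A : ι → ℝ) (hrA : ∀ i j, r j < r i → A j ≤ A i) : ∑ i, r i * drift κ A i ≤ 0 := by
  classical
  -- layer-cake induction on the set of values of `r`, peeling off its top level
  suffices ∀ V : Finset ℝ, ∀ r : ι → ℝ, (∀ i, r i ∈ V) → (∀ i j, r j < r i → A j ≤ A i) →
      ∑ i, r i * drift κ A i ≤ 0 from this _ r (fun i => mem_image_of_mem r (mem_univ i)) hrA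
  intro V
  induction V using Finset.induction_on_max with
  | empty => exact fun r hr _ => (sum_eq_zero fun i _ => absurd (hr i) (notMem_empty _)).le
  | insert τ V hτ ih =>
    intro r hr hrA
    rcases V.eq_empty_or_nonempty with rfl | hne
    · have hr_eq : ∀ i, r i = τ := fun i => by simpa using hr i
      simp_rw [hr_eq, sum_const_mul_drift hbal τ A, le_refl]
    set τ' := V.max' hne
    have hτ' : τ' < τ := hτ τ' (V.max'_mem hne)
    have hr_lt : ∀ i, r i ≠ τ → r i ≤ τ' := fun i h =>
      V.le_max' _ ((mem_insert.mp (hr i)).resolve_left h)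
    have htrunc : ∑ i, min (r i) τ' * drift κ A i ≤ 0 := by
      refine ih _ (fun i => ?_) fun i j h => hrA i j ?_
      · by_cases h : r i = τ
        · simpa [min_eq_right (h ▸ hτ'.le)] using V.max'_mem hne
        · simpa [min_eq_left (hr_lt i h)] using (mem_insert.mp (hr i)).resolve_left h
      · by_contra! hji
        exact h.not_ge (min_le_min_right τ' hji)
    have htop : ∑ i with r i = τ, drift κ A i ≤ 0 :=
      sum_drift_nonpos_of_forall_le hκ hbal A _ fun i hi j hj =>
        hrA i j <| (hr_lt j (by simpa using hj)).trans_lt <| by rwa [(mem_filter.mp hi).2]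
    rw [sum_mul_drift_eq_truncate_add r A hτ'.le hr_lt]
    linarith [mul_nonpos_of_nonneg_of_nonpos (sub_nonneg.mpr hτ'.le) htop]

end Drift

lemma antitone_of_forall_embS_le {α : Type*} [Preorder α] {n : ℕ} {f : Fin n → α}
    (h : ∀ p : Fin (n - 1), f (embS p) ≤ f (emb p)) : Antitone f := by
  cases n with
  | zero => exact fun a => a.elim0
  | succ n => exact Fin.antitone_iff_succ_le.mpr h

lemma le_of_lt_of_antitone_comp {α β γ δ : Type*} [LinearOrder α] [LinearOrder γ] [Preorder δ]
    (μ : α ≃ β) {r : β → γ} {A : β → δ}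
    (hr : Antitone fun a => r (μ a)) (hA : Antitone fun a => A (μ a)) {i j : β}
    (h : r j < r i) : A j ≤ A i := by
  have hle : μ.symm i ≤ μ.symm j := le_of_not_ge fun hji => h.not_ge (by simpa using hr hji)
  simpa using hA hle

section MassAction

variable {m n : ℕ}

lemma mono_eq_mul_ratio {xstar : Fin m → ℝ} (hxs : ∀ l, 0 < xstar l) (zv : Fin m → ℕ)
    (x : Fin m → ℝ) : mono zv x = mono zv xstar * ratio xstar x zv := by
  simp only [mono, ratio, ← prod_mul_distrib, ← mul_pow, mul_div_cancel₀ _ (hxs _).ne']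

lemma continuous_ratio (xstar : Fin m → ℝ) (zv : Fin m → ℕ) :
    Continuous fun x => ratio xstar x zv :=
  continuous_finsetProd _ fun l _ => ((continuous_apply l).div_const _).pow _

lemma log_ratio {xstar x : Fin m → ℝ} (hxs : ∀ l, 0 < xstar l) (hx : ∀ l, 0 < x l)
    (zv : Fin m → ℕ) :
    Real.log (ratio xstar x zv) = (fun l => (zv l : ℝ)) ⬝ᵥ fun l => Real.log (x l / xstar l) := by
  rw [ratio, Real.log_prod fun l _ => pow_ne_zero _ (div_pos (hx l) (hxs l)).ne']
  simp [dotProduct, Real.log_pow]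

lemma antitone_ratio_of_mem_closure_stratum (z : Fin n → Fin m → ℕ) (xstar : Fin m → ℝ)
    (μ : Equiv.Perm (Fin n)) {x : Fin m → ℝ} (hx : x ∈ closure (stratum z xstar μ)) :
    Antitone fun i => ratio xstar x (z (μ i)) := by
  refine antitone_of_forall_embS_le fun p => ?_
  have hclosed : IsClosed {x | ratio xstar x (z (μ (embS p))) ≤ ratio xstar x (z (μ (emb p)))} :=
    isClosed_le (continuous_ratio xstar _) (continuous_ratio xstar _)
  exact closure_minimal (fun y hy => (hy.2 p).le) hclosed hx

lemma dotProduct_maf (z : Fin n → Fin m → ℕ) (k : Fin n → Fin n → ℝ) (α x : Fin m → ℝ) :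
    α ⬝ᵥ maf z k x = ∑ i, mono (z i) x * drift k (fun j => α ⬝ᵥ fun l => (z j l : ℝ)) i := by
  simp only [dotProduct, maf, drift, mul_sum, ← sum_sub_distrib]
  rw [sum_comm]
  refine sum_congr rfl fun i _ => ?_
  rw [sum_comm]
  exact sum_congr rfl fun j _ => sum_congr rfl fun l _ => by ring

theorem dotProduct_maf_nonpos_of_antitone (z : Fin n → Fin m → ℕ) (k : Fin n → Fin n → ℝ)
    (hknn : ∀ i j, 0 ≤ k i j) (xstar : Fin m → ℝ) (hxs : ∀ l, 0 < xstar l)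
    (hcb : complexBalanced z k xstar) (μ : Equiv.Perm (Fin n)) (α : Fin m → ℝ)
    (hα : Antitone fun i => α ⬝ᵥ fun l => (z (μ i) l : ℝ))
    {x : Fin m → ℝ} (hx : x ∈ closure (stratum z xstar μ)) : α ⬝ᵥ maf z k x ≤ 0 := by
  set A : Fin n → ℝ := fun i => α ⬝ᵥ fun l => (z i l : ℝ)
  set r : Fin n → ℝ := fun i => ratio xstar x (z i)
  set κ : Fin n → Fin n → ℝ := fun i j => mono (z i) xstar * k i j
  have hκ : ∀ i j, 0 ≤ κ i j := fun i j =>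
    mul_nonneg (prod_nonneg fun l _ => pow_nonneg (hxs l).le _) (hknn i j)
  have hbal : ∀ i, ∑ j, κ j i = ∑ j, κ i j := fun i => by
    simp only [κ, ← mul_sum, ← hcb i]
    exact sum_congr rfl fun j _ => mul_comm _ _
  have hrA : ∀ i j, r j < r i → A j ≤ A i := fun i j =>
    le_of_lt_of_antitone_comp μ (antitone_ratio_of_mem_closure_stratum z xstar μ hx) hα
  calc α ⬝ᵥ maf z k x = ∑ i, r i * drift κ A i := by
        rw [dotProduct_maf]
        refine sum_congr rfl fun i _ => ?_
        simp only [mono_eq_mul_ratio hxs (z i) x, drift, mul_sum, r, κ, A]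
        exact sum_congr rfl fun j _ => by ring
    _ ≤ 0 := sum_mul_drift_nonpos hκ hbal r A hrA

end MassAction

section ConeOfTendsto

variable {ι κ : Type*} [Fintype ι] [Fintype κ]

lemma indicator_dotProduct (s : Set κ) (v w : κ → ℝ) :
    s.indicator v ⬝ᵥ w = v ⬝ᵥ s.indicator w := by
  classical
  simp only [dotProduct, Set.indicator_apply]
  exact sum_congr rfl fun l _ => by split_ifs <;> simp

lemma exists_dotProduct_nonneg_of_tendsto (v : ι → κ → ℝ) (I : Finset κ) (B : ℕ → κ → ℝ)
    (c : κ → ℝ) (hv : ∀ p s, 0 ≤ v p ⬝ᵥ B s) (hI : ∀ l ∈ I, Tendsto (B · l) atTop atBot)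
    (hIc : ∀ l ∉ I, Tendsto (B · l) atTop (𝓝 (c l))) {l₀ : κ} (hl₀ : l₀ ∈ I) :
    ∃ y : κ → ℝ, (∀ p, 0 ≤ v p ⬝ᵥ y) ∧ (∀ l, y l ≤ 0) ∧ (∀ l ∉ I, y l = 0) ∧ y l₀ < 0 := by
  classical
  set π : (κ → ℝ) → κ → ℝ := (I : Set κ).indicator
  have hπc : ∀ p, Tendsto (fun s => (I : Set κ)ᶜ.indicator (v p) ⬝ᵥ B s) atTop
      (𝓝 ((I : Set κ)ᶜ.indicator (v p) ⬝ᵥ c)) := fun p => by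
    refine tendsto_finsetSum _ fun l _ => ?_
    by_cases hl : l ∈ I
    · simp [hl]
    · simpa [hl] using (hIc l hl).const_mul (v p l)
  set w : ι ⊕ I → κ → ℝ := Sum.elim (fun p => π (v p)) fun l => -Pi.single (l : κ) 1
  have hw : ∀ i, ∃ C, ∀ᶠ s in atTop, C ≤ w i ⬝ᵥ B s := by
    rintro (p | ⟨l, hl⟩)
    · refine ⟨-((I : Set κ)ᶜ.indicator (v p) ⬝ᵥ c + 1), ?_⟩
      filter_upwards [(hπc p).eventually (eventually_lt_nhds (lt_add_one _))] with s hs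
      have hsplit : π (v p) ⬝ᵥ B s + (I : Set κ)ᶜ.indicator (v p) ⬝ᵥ B s = v p ⬝ᵥ B s := by
        rw [← add_dotProduct, Set.indicator_self_add_compl]
      simp only [w, Sum.elim_inl]
      linarith [hv p s]
    · refine ⟨0, ?_⟩
      filter_upwards [(hI l hl).eventually (eventually_le_atBot 0)] with s hs
      simpa [w] using hs
  obtain ⟨y, hy, hyl₀⟩ :=
    exists_dotProduct_nonneg_of_tendsto_atBot w (Pi.single l₀ 1) B hw (by simpa using hI l₀ hl₀)
  refine ⟨π y, fun p => ?_, fun l => ?_, fun l hl => by simp [π, hl], by simpa [π, hl₀] using hyl₀⟩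
  · simpa [w, π, indicator_dotProduct] using hy (Sum.inl p)
  · by_cases hl : l ∈ I
    · simpa [w, π, hl] using hy (Sum.inr ⟨l, hl⟩)
    · simp [π, hl]

lemma exists_neg_on_dotProduct_nonneg_of_tendsto (v : ι → κ → ℝ) (I : Finset κ)
    (B : ℕ → κ → ℝ) (c : κ → ℝ) (hv : ∀ p s, 0 ≤ v p ⬝ᵥ B s)
    (hI : ∀ l ∈ I, Tendsto (B · l) atTop atBot)
    (hIc : ∀ l ∉ I, Tendsto (B · l) atTop (𝓝 (c l))) :
    ∃ α : κ → ℝ, (∀ p, 0 ≤ v p ⬝ᵥ α) ∧ (∀ l ∈ I, α l < 0) ∧ (∀ l ∉ I, α l = 0) := by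
  choose y hyv hyle hyI hyneg using
    fun l₀ : I => exists_dotProduct_nonneg_of_tendsto v I B c hv hI hIc l₀.2
  refine ⟨∑ l₀, y l₀, fun p => ?_, fun l hl => ?_, fun l hl => ?_⟩
  · rw [dotProduct_sum]
    exact sum_nonneg fun l₀ _ => hyv l₀ p
  · have hle := single_le_sum (f := fun l₀ => -y l₀ l) (fun l₀ _ => neg_nonneg.mpr (hyle l₀ l))
      (mem_univ ⟨l, hl⟩)
    rw [sum_neg_distrib] at hle
    rw [Finset.sum_apply]
    linarith [hyneg ⟨l, hl⟩]
  · rw [Finset.sum_apply]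
    exact sum_eq_zero fun l₀ _ => hyI l₀ l hl

end ConeOfTendsto

theorem exists_antitone_of_closure_stratum_inter_LI {m n : ℕ} (z : Fin n → Fin m → ℕ)
    {xstar : Fin m → ℝ} (hxs : ∀ l, 0 < xstar l) (μ : Equiv.Perm (Fin n)) (I : Finset (Fin m))
    (h : (closure (stratum z xstar μ) ∩ LI I).Nonempty) :
    ∃ α : Fin m → ℝ, (∀ l ∈ I, α l < 0) ∧ (∀ l ∉ I, α l = 0) ∧
      Antitone fun i => α ⬝ᵥ fun l => (z (μ i) l : ℝ) := by
  obtain ⟨xbar, hcl, hxI, hxIc⟩ := h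
  obtain ⟨u, hu, hlim⟩ := mem_closure_iff_seq_limit.mp hcl
  set B : ℕ → Fin m → ℝ := fun s l => Real.log (u s l / xstar l)
  set v : Fin (n - 1) → Fin m → ℝ :=
    fun p => (fun l => (z (μ (emb p)) l : ℝ)) - fun l => (z (μ (embS p)) l : ℝ)
  have hv : ∀ p s, 0 ≤ v p ⬝ᵥ B s := fun p s => by
    have hpos : 0 < ratio xstar (u s) (z (μ (embS p))) :=
      prod_pos fun l _ => pow_pos (div_pos ((hu s).1 l) (hxs l)) _
    have hlog := Real.log_lt_log hpos ((hu s).2 p)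
    rw [log_ratio hxs (hu s).1, log_ratio hxs (hu s).1] at hlog
    rw [sub_dotProduct]
    linarith
  have hlim' : ∀ l, Tendsto (fun s => u s l / xstar l) atTop (𝓝 (xbar l / xstar l)) :=
    fun l => (tendsto_pi_nhds.mp hlim l).div_const _
  have hI : ∀ l ∈ I, Tendsto (B · l) atTop atBot := fun l hl =>
    Real.tendsto_log_nhdsNE_zero.comp <| tendsto_nhdsWithin_of_tendsto_nhds_of_eventually_within _
      (by simpa [hxI l hl] using hlim' l)
      (Eventually.of_forall fun s => (div_pos ((hu s).1 l) (hxs l)).ne')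
  have hIc : ∀ l ∉ I, Tendsto (B · l) atTop (𝓝 (Real.log (xbar l / xstar l))) := fun l hl =>
    ((Real.continuousAt_log (div_pos (hxIc l hl) (hxs l)).ne').tendsto).comp (hlim' l)
  obtain ⟨α, hαv, hαI, hαIc⟩ := exists_neg_on_dotProduct_nonneg_of_tendsto v I B _ hv hI hIc
  refine ⟨α, hαI, hαIc, antitone_of_forall_embS_le fun p => ?_⟩
  have := hαv p
  rw [dotProduct_comm, dotProduct_sub] at this
  linarith

theorem stmt8_general {m n : ℕ} (z : Fin n → Fin m → ℕ)
    (k : Fin n → Fin n → ℝ) (hknn : ∀ i j, 0 ≤ k i j)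
    (xstar : Fin m → ℝ) (hxs : ∀ l, 0 < xstar l)
    (hcb : complexBalanced z k xstar)
    (μ : Equiv.Perm (Fin n)) (I : Finset (Fin m))
    (h : (closure (stratum z xstar μ) ∩ LI I).Nonempty) :
    ∃ α : Fin m → ℝ, (∀ i ∈ I, α i < 0) ∧ (∀ i ∉ I, α i = 0) ∧
      ∀ x ∈ closure (stratum z xstar μ), ∑ l, α l * maf z k x l ≤ 0 := by
  obtain ⟨α, hαI, hαIc, hα⟩ := exists_antitone_of_closure_stratum_inter_LI z hxs μ I h
  exact ⟨α, hαI, hαIc, fun x hx =>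
    dotProduct_maf_nonpos_of_antitone z k hknn xstar hxs hcb μ α hα hx⟩

/-- for a (general) complex balanced system, if `cl(S_μ) ∩ L_I ≠ ∅` then
there is `α` negative on `I`, zero off `I`, with `⟨α, f(x)⟩ ≤ 0` on `cl(S_μ)`. -/
theorem stmt8 {m n : ℕ} (z : Fin n → Fin m → ℕ) (hz : Function.Injective z)
    (k : Fin n → Fin n → ℝ) (hknn : ∀ i j, 0 ≤ k i j) (hkd : ∀ i, k i i = 0)
    (xstar : Fin m → ℝ) (hxs : ∀ l, 0 < xstar l)
    (hcb : complexBalanced z k xstar)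
    (μ : Equiv.Perm (Fin n)) (I : Finset (Fin m)) (hI : I.Nonempty)
    (h : (closure (stratum z xstar μ) ∩ LI I).Nonempty) :
    ∃ α : Fin m → ℝ, (∀ i ∈ I, α i < 0) ∧ (∀ i ∉ I, α i = 0) ∧
      ∀ x ∈ closure (stratum z xstar μ), ∑ l, α l * maf z k x l ≤ 0 :=
  stmt8_general z k hknn xstar hxs hcb μ I h
end
end

section
/- Consider a mass-action system such that every solution x(t) of x' = f(x) with x(0) = x_0 ∈ ℝ_{>0}^m is defined and bounded on [0, ∞). Suppose that for every semi-locking set I there exists α_I ∈ ℝ^m with (α_I)_i < 0 for all i ∈ I and (α_I)_i = 0 for all i ∉ I, such that for every compact subset K of L_I there is a relatively open neighbourhood U of K in ℝ_{≥0}^m with ⟨α_I, f(x)⟩ ≤ 0 for all x ∈ U. Then for every x_0 ∈ ℝ_{>0}^m, the ω-limit set ω(x_0) of the solution starting at x_0 contains no point of the boundary of the positive orthant; that is, ω(x_0) contains no point of ℝ_{≥0}^m having a zero coordinate. -/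
open Filter Topology

noncomputable section

/-!
The trajectory stays in a bounded box, and it stays positive: near a face, each vanishing
coordinate `x_l` has `ẋ_l ≥ -M x_l` (only outflow reactions consume species `l`, at a rate
`O(x_l)`). Hence the ω-limit set `ω` is compact and lies in the closed orthant. If it met the
boundary, take `w ∈ ω` whose zero set `I` is maximal among the zero sets of points of `ω`.
A reaction producing a species of `I` from a complex supported off `I` would make `f(w)` point
strictly into the orthant, which is impossible at an ω-limit point; so `I` is semi-locking.
By maximality `K = ω ∩ {x_I = 0}` is a compact subset of `L_I`, and `L = ⟨α_I, ·⟩` is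
negative along the trajectory, `≤ 0` on `ω` and zero on `ω` exactly on `K`. So once
`L(x(t))` is close to `0`, the trajectory is near `K`, where `L` is nonincreasing; hence
`L(x(t))` never gets back up to `0`, contradicting `L(w) = 0`.
-/

open Set

section Trajectory

variable {ι : Type*} [Fintype ι]

theorem pos_of_hasDerivAt_of_neg_mul_le {F : (ι → ℝ) → ι → ℝ} {x : ℝ → ι → ℝ} {M : ℝ}
    (hx0 : ∀ l, 0 < x 0 l) (hx : ∀ t ≥ 0, HasDerivAt x (F (x t)) t)
    (hF : ∀ t ≥ 0, (∀ l, 0 < x t l) → ∀ l, -M * x t l ≤ F (x t) l) :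
    ∀ t ≥ 0, ∀ l, 0 < x t l := by
  by_contra! ⟨t₁, ht₁, l₁, hl₁⟩
  set B := Ici 0 ∩ x ⁻¹' {p | ∃ l, p l ≤ 0}
  have hBbdd : BddBelow B := ⟨0, fun s hs => hs.1⟩
  have hBclosed : IsClosed B := by
    refine ContinuousOn.preimage_isClosed_of_isClosed
      (fun s hs => (hx s hs).continuousAt.continuousWithinAt) isClosed_Ici ?_
    simp only [ofPred_exists]
    exact isClosed_iUnion_of_finite fun l => isClosed_le (continuous_apply l) continuous_const
  set T := sInf B
  have hTB : T ∈ B := hBclosed.csInf_mem ⟨t₁, ht₁, l₁, hl₁⟩ hBbdd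
  have hbefore : ∀ s ∈ Ico 0 T, ∀ l, 0 < x s l := fun s hs l => by
    by_contra! h
    exact hs.2.not_ge (csInf_le hBbdd ⟨hs.1, l, h⟩)
  obtain ⟨hT, l, hl⟩ := hTB
  have hderiv : ∀ s ≥ 0, HasDerivAt (fun s => x s l * Real.exp (M * s))
      ((F (x s) l + M * x s l) * Real.exp (M * s)) s := fun s hs =>
    ((hasDerivAt_pi.1 (hx s hs) l).fun_mul (hasDerivAt_const_mul M).exp).congr_deriv (by ring)
  -- Gronwall: `x_l(s) e^{Ms}` is nondecreasing as long as all coordinates stay positive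
  have hmono : MonotoneOn (fun s => x s l * Real.exp (M * s)) (Icc 0 T) := by
    refine monotoneOn_of_hasDerivWithinAt_nonneg (convex_Icc 0 T)
      (fun s hs => (hderiv s hs.1).continuousAt.continuousWithinAt)
      (fun s hs => (hderiv s (interior_subset hs).1).hasDerivWithinAt) fun s hs => ?_
    rw [interior_Icc] at hs
    have := hF s hs.1.le (hbefore s ⟨hs.1.le, hs.2⟩) l
    exact mul_nonneg (by linarith) (Real.exp_pos _).le
  have hT0 := hmono ⟨le_rfl, hT⟩ ⟨hT, le_rfl⟩ hT
  simp only [mul_zero, Real.exp_zero, mul_one] at hT0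
  exact (hx0 l).not_ge (hT0.trans (mul_nonpos_of_nonpos_of_nonneg hl (Real.exp_pos _).le))

theorem apply_nonpos_of_mapClusterPt {F : (ι → ℝ) → ι → ℝ} (hF : Continuous F)
    {x : ℝ → ι → ℝ} (hx : ∀ t ≥ 0, HasDerivAt x (F (x t)) t) {c : Set (ι → ℝ)}
    (hc : IsCompact c) (hxc : ∀ t ≥ 0, x t ∈ c) {l : ι} (hxl : ∀ t ≥ 0, 0 ≤ x t l)
    {w : ι → ℝ} (hw : MapClusterPt w atTop x) (hwl : w l = 0) : F w l ≤ 0 := by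
  by_contra! hFw
  obtain ⟨M, hM⟩ := hc.exists_bound_of_continuousOn hF.continuousOn
  have hM0 : 0 ≤ M := (norm_nonneg _).trans (hM _ (hxc 0 le_rfl))
  obtain ⟨r, hr, hball⟩ : ∃ r > 0, Metric.ball w r ⊆ {p | F w l / 2 < F p l} :=
    Metric.mem_nhds_iff.1 <| ((continuous_apply l).comp hF).continuousAt.preimage_mem_nhds <|
      Ioi_mem_nhds (half_lt_self hFw)
  obtain ⟨τ, hτ, hMτ⟩ := exists_pos_mul_lt (half_pos hr) M
  have hnear : ∀ᶠ p in 𝓝 w, p ∈ Metric.ball w (r / 2) ∧ p l < F w l / 2 * τ :=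
    Filter.Eventually.and (Metric.ball_mem_nhds w (half_pos hr)) <|
      (continuous_apply l).continuousAt.eventually
        (gt_mem_nhds (show w l < _ by rw [hwl]; positivity))
  obtain ⟨t, ⟨hxt, hxtl⟩, htτ⟩ :=
    ((hw.frequently hnear).and_eventually (eventually_ge_atTop τ)).exists
  -- on `[t - τ, t]` the trajectory stays in the ball, so `x_l` grows at rate at least `F w l / 2`
  obtain ⟨s, hs, hslope⟩ := exists_hasDerivAt_eq_slope (fun s => x s l) (fun s => F (x s) l)
    (sub_lt_self t hτ)
    (fun s hs => (hasDerivAt_pi.1 (hx s (by linarith [hs.1])) l).continuousAt.continuousWithinAt)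
    (fun s hs => hasDerivAt_pi.1 (hx s (by linarith [hs.1])) l)
  have hxs : x s ∈ Metric.ball w r := by
    have hlip := norm_image_sub_le_of_norm_deriv_le_segment'
      (fun v hv => (hx v (by linarith [hs.1, hv.1])).hasDerivWithinAt)
      (fun v hv => hM _ (hxc v (by linarith [hs.1, hv.1]))) t ⟨hs.2.le, le_rfl⟩
    rw [Metric.mem_ball] at hxt ⊢
    calc dist (x s) w ≤ dist (x t) (x s) + dist (x t) w := dist_triangle_left _ _ _
      _ < r / 2 + r / 2 := by
        refine add_lt_add_of_le_of_lt ?_ hxt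
        rw [dist_eq_norm]
        nlinarith [hs.1]
      _ = r := add_halves r
  have hgrow := hball hxs
  rw [mem_ofPred_eq, hslope, sub_sub_cancel, lt_div_iff₀ hτ] at hgrow
  linarith [hxl (t - τ) (by linarith)]

theorem sum_mul_eq_zero_iff {α q : ι → ℝ} {I : Finset ι}
    (hαI : ∀ i ∈ I, α i < 0) (hα0 : ∀ i ∉ I, α i = 0) (hq : ∀ l, 0 ≤ q l) :
    ∑ l, α l * q l = 0 ↔ ∀ i ∈ I, q i = 0 := by
  have hα : ∀ l, α l ≤ 0 := fun l => by
    by_cases hl : l ∈ I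
    · exact (hαI l hl).le
    · exact (hα0 l hl).le
  rw [Finset.sum_eq_zero_iff_of_nonpos fun l _ => mul_nonpos_of_nonpos_of_nonneg (hα l) (hq l)]
  refine ⟨fun h i hi => (mul_eq_zero.1 (h i (Finset.mem_univ i))).resolve_left (hαI i hi).ne,
    fun h l _ => ?_⟩
  by_cases hl : l ∈ I
  · rw [h l hl, mul_zero]
  · rw [hα0 l hl, zero_mul]

theorem sum_mul_neg {α q : ι → ℝ} {I : Finset ι}
    (hαI : ∀ i ∈ I, α i < 0) (hα0 : ∀ i ∉ I, α i = 0) (hI : I.Nonempty) (hq : ∀ l, 0 < q l) :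
    ∑ l, α l * q l < 0 := by
  obtain ⟨i, hi⟩ := hI
  refine Finset.sum_neg' (fun l _ => ?_)
    ⟨i, Finset.mem_univ i, mul_neg_of_neg_of_pos (hαI i hi) (hq i)⟩
  by_cases hl : l ∈ I
  · exact (mul_neg_of_neg_of_pos (hαI l hl) (hq l)).le
  · rw [hα0 l hl, zero_mul]

end Trajectory

theorem nonneg_of_mapClusterPt {ι : Type*} {x : ℝ → ι → ℝ} (hx : ∀ t ≥ 0, ∀ l, 0 ≤ x t l)
    {w : ι → ℝ} (hw : MapClusterPt w atTop x) (l : ι) : 0 ≤ w l :=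
  (isClosed_le continuous_const (continuous_apply l)).mem_of_mapClusterPt hw <|
    (eventually_ge_atTop 0).mono fun t ht => hx t ht l

theorem eventually_mem_of_mapClusterPt_mem {α X : Type*} [TopologicalSpace X] {f : Filter α}
    {x : α → X} {c U : Set X} (hc : IsCompact c) (hxc : ∀ᶠ t in f, x t ∈ c) (hU : IsOpen U)
    (hωU : ∀ q, MapClusterPt q f x → q ∈ U) : ∀ᶠ t in f, x t ∈ U := by
  by_contra h
  obtain ⟨q, hq, hqx⟩ := (hc.diff hU).exists_mapClusterPt_of_frequently <|
    ((not_eventually.1 h).and_eventually hxc).mono fun _ ht => ⟨ht.2, ht.1⟩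
  exact hq.2 (hωU q hqx)

theorem le_of_hasDerivAt_nonpos_of_lt {g g' : ℝ → ℝ} {a b : ℝ} (hb : b < g a)
    (hg : ∀ t ≥ a, HasDerivAt g (g' t) t) (hg' : ∀ t ≥ a, b < g t → g' t ≤ 0) {t : ℝ}
    (ht : a ≤ t) : g t ≤ g a := by
  refine le_of_forall_pos_le_add fun ε hε => ?_
  set δ := ε / (t - a + 1)
  have hδ : 0 < δ := div_pos hε (by linarith)
  -- compare `g` with the line of slope `δ` through `(a, g a)`, then let `δ → 0`
  have hline := image_le_of_deriv_right_lt_deriv_boundary (f := g) (B := fun s => g a + δ * (s - a))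
    (fun s hs => (hg s hs.1).continuousAt.continuousWithinAt)
    (fun s hs => (hg s hs.1).hasDerivWithinAt) (by simp)
    (fun s => (((hasDerivAt_id s).sub_const a).const_mul δ).const_add (g a))
    (fun s hs hgs => (hg' s hs.1 (by nlinarith [hs.1])).trans_lt (by simpa using hδ))
    ⟨ht, le_rfl⟩
  calc g t ≤ g a + δ * (t - a) := hline
    _ ≤ g a + ε := by
      have : δ * (t - a + 1) = ε := div_mul_cancel₀ ε (by linarith)
      nlinarith

theorem neg_of_mapClusterPt {X : Type*} [TopologicalSpace X] [T2Space X] {x : ℝ → X}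
    {L : X → ℝ} (hL : Continuous L) {g' : ℝ → ℝ}
    (hLx : ∀ t ≥ 0, HasDerivAt (fun t => L (x t)) (g' t) t) {c V : Set X} (hc : IsCompact c)
    (hxc : ∀ t ≥ 0, x t ∈ c) (hV : IsOpen V) (hg' : ∀ t ≥ 0, x t ∈ V → g' t ≤ 0)
    (hneg : ∀ t ≥ 0, L (x t) < 0) (hωV : ∀ q, MapClusterPt q atTop x → L q = 0 → q ∈ V)
    {w : X} (hw : MapClusterPt w atTop x) : L w < 0 := by
  set ω := {q | MapClusterPt q atTop x}
  have hωL : ∀ q ∈ ω, L q ≤ 0 := fun q hq =>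
    (isClosed_le hL continuous_const).mem_of_mapClusterPt hq <|
      (eventually_ge_atTop 0).mono fun t ht => (hneg t ht).le
  -- away from `V`, the limit set lies uniformly below the level `L = 0`
  obtain ⟨ρ, hρ, hωρ⟩ : ∃ ρ > 0, ∀ q ∈ ω \ V, L q < -ρ := by
    have hcompact : IsCompact (ω \ V) := hc.of_isClosed_subset
      (isClosed_setOfPred_clusterPt.sdiff hV) fun q hq => hc.isClosed.mem_of_mapClusterPt hq.1 <|
        (eventually_ge_atTop 0).mono hxc
    rcases (ω \ V).eq_empty_or_nonempty with hempty | hne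
    · exact ⟨1, one_pos, by simp [hempty]⟩
    obtain ⟨q₀, hq₀, hmax⟩ := hcompact.exists_isMaxOn hne hL.continuousOn
    have hq₀neg : L q₀ < 0 := (hωL q₀ hq₀.1).lt_of_ne fun h => hq₀.2 (hωV q₀ hq₀.1 h)
    exact ⟨-L q₀ / 2, by linarith, fun q hq => by linarith [isMaxOn_iff.1 hmax q hq]⟩
  obtain ⟨T, hT⟩ := eventually_atTop.1 <|
    (eventually_mem_of_mapClusterPt_mem (U := V ∪ {p | L p < -ρ}) hc
      ((eventually_ge_atTop 0).mono hxc) (hV.union (isOpen_lt hL continuous_const))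
      fun q hq => (em (q ∈ V)).imp_right fun hqV => hωρ q ⟨hq, hqV⟩).and
    (eventually_ge_atTop 0)
  by_contra! hw0
  have hLw : L w = 0 := le_antisymm (hωL w hw) hw0
  obtain ⟨t₀, hLt₀, ht₀⟩ := ((hw.frequently ((hL.tendsto w).eventually
    (lt_mem_nhds (show -ρ < L w by linarith)))).and_eventually (eventually_ge_atTop T)).exists
  -- once above `-ρ`, `L ∘ x` can never climb back up
  have hbarrier : ∀ t ≥ t₀, L (x t) ≤ L (x t₀) := fun t ht =>
    le_of_hasDerivAt_nonpos_of_lt hLt₀ (fun s hs => hLx s ((hT t₀ ht₀).2.trans hs))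
      (fun s hs hLs => hg' s (hT s (ht₀.trans hs)).2
        (((hT s (ht₀.trans hs)).1).resolve_right hLs.not_gt)) ht
  obtain ⟨t, hLt, ht⟩ := ((hw.frequently ((hL.tendsto w).eventually
    (lt_mem_nhds (show L (x t₀) < L w from hLw ▸ hneg t₀ (hT t₀ ht₀).2)))).and_eventually
    (eventually_ge_atTop t₀)).exists
  exact (hbarrier t ht).not_gt hLt

section MassAction

variable {m n : ℕ}

theorem mono_nonneg (zv : Fin m → ℕ) {p : Fin m → ℝ} (hp : ∀ l, 0 ≤ p l) : 0 ≤ mono zv p :=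
  Finset.prod_nonneg fun l _ => pow_nonneg (hp l) _

theorem continuous_maf (z : Fin n → Fin m → ℕ) (k : Fin n → Fin n → ℝ) :
    Continuous (maf z k) := by
  unfold maf mono
  fun_prop

theorem mono_le_mul_pow {zv : Fin m → ℕ} {p : Fin m → ℝ} {C : ℝ} (hC : 1 ≤ C)
    (hp : ∀ r, 0 ≤ p r ∧ p r ≤ C) {l : Fin m} (hl : zv l ≠ 0) :
    mono zv p ≤ p l * C ^ ∑ r, zv r := by
  have hpow : p l ^ zv l ≤ p l * C ^ zv l := by
    obtain ⟨e, he⟩ := Nat.exists_eq_succ_of_ne_zero hl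
    rw [he, pow_succ', pow_succ']
    exact mul_le_mul_of_nonneg_left
      ((pow_le_pow_left₀ (hp l).1 (hp l).2 e).trans (le_mul_of_one_le_left (by positivity) hC))
      (hp l).1
  calc mono zv p ≤ ∏ r, (if r = l then p l else 1) * C ^ zv r := by
        refine Finset.prod_le_prod (fun r _ => pow_nonneg (hp r).1 _) fun r _ => ?_
        split_ifs with h
        · exact h ▸ hpow
        · rw [one_mul]
          exact pow_le_pow_left₀ (hp r).1 (hp r).2 _
    _ = p l * C ^ ∑ r, zv r := by
        rw [Finset.prod_mul_distrib, Finset.prod_ite_eq', Finset.prod_pow_eq_pow_sum]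
        simp

theorem exists_neg_mul_le_maf (z : Fin n → Fin m → ℕ) {k : Fin n → Fin n → ℝ}
    (hk : ∀ i j, 0 ≤ k i j) (C : ℝ) :
    ∃ M, ∀ p : Fin m → ℝ, (∀ r, 0 ≤ p r ∧ p r ≤ C) → ∀ l, -M * p l ≤ maf z k p l := by
  set C' := max C 1
  refine ⟨∑ i, ∑ j, k i j * ((∑ r, z i r : ℕ) * C' ^ ∑ r, z i r), fun p hp l => ?_⟩
  have hp' : ∀ r, 0 ≤ p r ∧ p r ≤ C' := fun r => ⟨(hp r).1, (hp r).2.trans (le_max_left _ _)⟩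
  -- only the outflow `-k i j * z_i l * x^{z_i}` can be negative, and it is `O(x_l)`
  have hout : ∀ i,
      (z i l : ℝ) * mono (z i) p ≤ (∑ r, z i r : ℕ) * (p l * C' ^ ∑ r, z i r) := by
    intro i
    rcases eq_or_ne (z i l) 0 with h | h
    · rw [h, Nat.cast_zero, zero_mul]
      exact mul_nonneg (Nat.cast_nonneg _) (mul_nonneg (hp l).1 (by positivity))
    · have hzl : (z i l : ℝ) ≤ (∑ r, z i r : ℕ) :=
        Nat.cast_le.2 (Finset.single_le_sum (fun r _ => Nat.zero_le (z i r)) (Finset.mem_univ l))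
      exact mul_le_mul hzl (mono_le_mul_pow (le_max_right _ _) hp' h)
        (mono_nonneg _ fun r => (hp r).1) (Nat.cast_nonneg _)
  simp only [maf, neg_mul, Finset.sum_mul, ← Finset.sum_neg_distrib]
  refine Finset.sum_le_sum fun i _ => Finset.sum_le_sum fun j _ => ?_
  have := mul_le_mul_of_nonneg_left (hout i) (hk i j)
  have := mul_nonneg (mul_nonneg (hk i j) (Nat.cast_nonneg (z j l)))
    (mono_nonneg (z i) fun r => (hp r).1)
  nlinarith

theorem maf_pos_of_inflow {z : Fin n → Fin m → ℕ} {k : Fin n → Fin n → ℝ}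
    (hk : ∀ i j, 0 ≤ k i j) {w : Fin m → ℝ} (hw : ∀ r, 0 ≤ w r) {l : Fin m} (hwl : w l = 0)
    {i j : Fin n} (hkij : 0 < k i j) (hzj : 0 < z j l) (hzi : ∀ r, w r = 0 → z i r = 0) :
    0 < maf z k w l := by
  have hterm : ∀ a b, 0 ≤ k a b * ((z b l : ℝ) - z a l) * mono (z a) w := by
    intro a b
    rcases eq_or_ne (z a l) 0 with h | h
    · rw [h, Nat.cast_zero, sub_zero]
      exact mul_nonneg (mul_nonneg (hk a b) (Nat.cast_nonneg _)) (mono_nonneg _ hw)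
    · rw [show mono (z a) w = 0 from Finset.prod_eq_zero (Finset.mem_univ l) (by simp [hwl, h]),
        mul_zero]
  have hmono : 0 < mono (z i) w := Finset.prod_pos fun r _ => by
    rcases (hw r).eq_or_lt with h | h
    · rw [hzi r h.symm, pow_zero]; exact one_pos
    · exact pow_pos h _
  refine Finset.sum_pos' (fun a _ => Finset.sum_nonneg fun b _ => hterm a b)
    ⟨i, Finset.mem_univ i, Finset.sum_pos' (fun b _ => hterm i b) ⟨j, Finset.mem_univ j, ?_⟩⟩
  rw [hzi l hwl, Nat.cast_zero, sub_zero]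
  exact mul_pos (mul_pos hkij (Nat.cast_pos.2 hzj)) hmono

theorem semiLocking_of_mapClusterPt {z : Fin n → Fin m → ℕ} {k : Fin n → Fin n → ℝ}
    (hk : ∀ i j, 0 ≤ k i j) {x : ℝ → Fin m → ℝ}
    (hx : ∀ t ≥ 0, HasDerivAt x (maf z k (x t)) t) {c : Set (Fin m → ℝ)} (hc : IsCompact c)
    (hxc : ∀ t ≥ 0, x t ∈ c) (hxpos : ∀ t ≥ 0, ∀ l, 0 ≤ x t l) {w : Fin m → ℝ}
    (hw : MapClusterPt w atTop x) {I : Finset (Fin m)} (hI : I.Nonempty)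
    (hwI : ∀ i, i ∈ I ↔ w i = 0) : semiLocking z k I := by
  refine ⟨hI, fun i j hkij ⟨l, hlI, hzjl⟩ => ?_⟩
  by_contra! hzi
  have hwl : w l = 0 := (hwI l).1 hlI
  exact (apply_nonpos_of_mapClusterPt (continuous_maf z k) hx hc hxc (fun t ht => hxpos t ht l)
    hw hwl).not_gt <| maf_pos_of_inflow hk (nonneg_of_mapClusterPt hxpos hw) hwl hkij hzjl
      fun r hr => Nat.le_zero.1 (hzi r ((hwI r).2 hr))

theorem exists_maximal_zeros {S : Set (Fin m → ℝ)} (hS : ∀ q ∈ S, ∀ l, 0 ≤ q l)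
    {y : Fin m → ℝ} (hy : y ∈ S) (hy0 : ∃ l, y l = 0) :
    ∃ I : Finset (Fin m), I.Nonempty ∧ (∃ w ∈ S, ∀ i, i ∈ I ↔ w i = 0) ∧
      S ∩ {q | ∀ i ∈ I, q i = 0} ⊆ LI I := by
  classical
  set F : Set (Finset (Fin m)) := {J | J.Nonempty ∧ ∃ w ∈ S, ∀ i, i ∈ J ↔ w i = 0}
  obtain ⟨l, hl⟩ := hy0
  obtain ⟨I, hI⟩ := F.toFinite.exists_maximal
    ⟨({i | y i = 0} : Finset (Fin m)), ⟨l, by simpa using hl⟩, y, hy, by simp⟩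
  refine ⟨I, hI.prop.1, hI.prop.2, fun q ⟨hqS, hqI⟩ => ⟨hqI, fun i hi => ?_⟩⟩
  have hIJ : I ⊆ ({i | q i = 0} : Finset (Fin m)) := fun i hi => by simpa using hqI i hi
  have hJ : ({i | q i = 0} : Finset (Fin m)) ∈ F := ⟨hI.prop.1.mono hIJ, q, hqS, by simp⟩
  refine (hS q hqS i).lt_of_ne fun h => hi ?_
  rw [hI.eq_of_le hJ hIJ]
  simpa using h.symm

end MassAction

theorem stmt9_general {m n : ℕ} (z : Fin n → Fin m → ℕ)
    (k : Fin n → Fin n → ℝ) (hknn : ∀ i j, 0 ≤ k i j)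
    (hbdd : ∀ x : ℝ → Fin m → ℝ, (∀ l, 0 < x 0 l) →
      (∀ t : ℝ, 0 ≤ t → HasDerivAt x (maf z k (x t)) t) →
      ∃ C : ℝ, ∀ t : ℝ, 0 ≤ t → ∀ l, |x t l| ≤ C)
    (hα : ∀ I : Finset (Fin m), semiLocking z k I →
      ∃ α : Fin m → ℝ, (∀ i ∈ I, α i < 0) ∧ (∀ i ∉ I, α i = 0) ∧
        ∀ K : Set (Fin m → ℝ), K ⊆ LI I → IsCompact K →
          ∃ V : Set (Fin m → ℝ), IsOpen V ∧ K ⊆ V ∧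
            ∀ x ∈ V, (∀ l, 0 ≤ x l) → ∑ l, α l * maf z k x l ≤ 0) :
    ∀ x : ℝ → Fin m → ℝ, (∀ l, 0 < x 0 l) →
      (∀ t : ℝ, 0 ≤ t → HasDerivAt x (maf z k (x t)) t) →
      ∀ y : Fin m → ℝ, (∀ l, 0 ≤ y l) → (∃ l, y l = 0) →
        ¬ ∃ tk : ℕ → ℝ, Tendsto tk atTop atTop ∧
            Tendsto (fun j => x (tk j)) atTop (𝓝 y) := by
  rintro x hx0 hx y - hy0 ⟨tk, htk, hxy⟩
  obtain ⟨C, hC⟩ := hbdd x hx0 hx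
  set c := univ.pi fun _ : Fin m => Icc (-C) C
  have hc : IsCompact c := isCompact_univ_pi fun _ => isCompact_Icc
  have hxc : ∀ t ≥ 0, x t ∈ c := fun t ht l _ => abs_le.1 (hC t ht l)
  have hxpos : ∀ t ≥ 0, ∀ l, 0 < x t l := by
    obtain ⟨M, hM⟩ := exists_neg_mul_le_maf z hknn C
    exact pos_of_hasDerivAt_of_neg_mul_le hx0 hx fun t ht hxt =>
      hM _ fun r => ⟨(hxt r).le, (le_abs_self _).trans (hC t ht r)⟩
  set ω := {q | MapClusterPt q atTop x}
  have hωpos : ∀ q ∈ ω, ∀ l, 0 ≤ q l := fun q hq =>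
    nonneg_of_mapClusterPt (fun t ht l => (hxpos t ht l).le) hq
  obtain ⟨I, hI, ⟨w, hwω, hwI⟩, hKI⟩ :=
    exists_maximal_zeros hωpos (hxy.mapClusterPt.of_comp htk) hy0
  obtain ⟨α, hαI, hα0, hαV⟩ := hα I <| semiLocking_of_mapClusterPt hknn hx
    hc hxc (fun t ht l => (hxpos t ht l).le) hwω hI hwI
  obtain ⟨V, hV, hKV, hVα⟩ := hαV _ hKI <| hc.of_isClosed_subset
    (isClosed_setOfPred_clusterPt.inter <| by
      simp only [ofPred_forall]
      exact isClosed_biInter fun i _ => isClosed_eq (continuous_apply i) continuous_const)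
    fun q hq => hc.isClosed.mem_of_mapClusterPt hq.1 ((eventually_ge_atTop 0).mono hxc)
  refine (neg_of_mapClusterPt (L := fun p => ∑ l, α l * p l) (by fun_prop)
    (fun t ht => HasDerivAt.fun_sum fun l _ => (hasDerivAt_pi.1 (hx t ht) l).const_mul (α l))
    hc hxc hV (fun t ht hxtV => hVα _ hxtV fun l => (hxpos t ht l).le)
    (fun t ht => sum_mul_neg (q := x t) hαI hα0 hI (hxpos t ht))
    (fun q hq hLq => hKV ⟨hq, (sum_mul_eq_zero_iff hαI hα0 (hωpos q hq)).1 hLq⟩) hwω).ne ?_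
  exact (sum_mul_eq_zero_iff hαI hα0 (hωpos w hwω)).2 fun i hi => (hwI i).1 hi

/-- a mass-action system with bounded solutions, such that for every
semi-locking set `I` there is a vector `α_I` (negative on `I`, zero off `I`) with
`⟨α_I, f⟩ ≤ 0` on a relatively open neighbourhood in `ℝ_{≥0}^m` of every compact subset
of `L_I`, has no ω-limit point on the boundary of the positive orthant. -/
theorem stmt9 {m n : ℕ} (z : Fin n → Fin m → ℕ) (hz : Function.Injective z)
    (k : Fin n → Fin n → ℝ) (hknn : ∀ i j, 0 ≤ k i j) (hkd : ∀ i, k i i = 0)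
    (hbdd : ∀ x : ℝ → Fin m → ℝ, (∀ l, 0 < x 0 l) →
      (∀ t : ℝ, 0 ≤ t → HasDerivAt x (maf z k (x t)) t) →
      ∃ C : ℝ, ∀ t : ℝ, 0 ≤ t → ∀ l, |x t l| ≤ C)
    (hα : ∀ I : Finset (Fin m), semiLocking z k I →
      ∃ α : Fin m → ℝ, (∀ i ∈ I, α i < 0) ∧ (∀ i ∉ I, α i = 0) ∧
        ∀ K : Set (Fin m → ℝ), K ⊆ LI I → IsCompact K →
          ∃ V : Set (Fin m → ℝ), IsOpen V ∧ K ⊆ V ∧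
            ∀ x ∈ V, (∀ l, 0 ≤ x l) → ∑ l, α l * maf z k x l ≤ 0) :
    ∀ x : ℝ → Fin m → ℝ, (∀ l, 0 < x 0 l) →
      (∀ t : ℝ, 0 ≤ t → HasDerivAt x (maf z k (x t)) t) →
      ∀ y : Fin m → ℝ, (∀ l, 0 ≤ y l) → (∃ l, y l = 0) →
        ¬ ∃ tk : ℕ → ℝ, Tendsto tk atTop atTop ∧
            Tendsto (fun j => x (tk j)) atTop (𝓝 y) :=
  stmt9_general z k hknn hbdd hα
end
end
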